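/- arXiv:1811.01942 — 5 statements merged into one kernel-verified Lean document; each statement's English description precedes it below -/
import Mathlib

section
/- If a definition D1 makes a labelled transition with action α to D1', and D1 is structurally congruent to D2, then D2 makes a transition with the same action α to some D2' structurally congruent to D1'. -/
set_option autoImplicit true

/-- Synchronisation directions: broadcast to children, parent, neighbour, self. -/
inductive Dir
  | star | up | nbr | slf

abbrev Label := ℕ
abbrev NodeId := ℕ

/-- Logical conditions (underlying logic left abstract, but closed under conjunction). -/
inductive Cond
  | atom (n : ℕ)
  | tt
  | and (c1 c2 : Cond)

/-- Protocols: P ::= 0 | P|P | rec X.P | X | S | (nid)P  with  S ::= f^d[o,i].P | S+S. -/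
inductive Protocol
  | nil
  | fork (P Q : Protocol)
  | recp (X : ℕ) (P : Protocol)
  | var (X : ℕ)
  | act (f : Label) (d : Dir) (o i : Cond) (P : Protocol)
  | sum (P Q : Protocol)
  | actv (nid : NodeId) (P : Protocol)

namespace Protocol

/-- Substitution P[Q/X] of protocol Q for free occurrences of recursion variable X. -/
def subst : Protocol → ℕ → Protocol → Protocol
  | nil, _, _ => nil
  | fork P Q, X, R => fork (subst P X R) (subst Q X R)
  | recp Y P, X, R => if Y = X then recp Y P else recp Y (subst P X R)
  | var Y, X, R => if Y = X then R else var Y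
  | act f d o i P, X, R => act f d o i (subst P X R)
  | sum P Q, X, R => sum (subst P X R) (subst Q X R)
  | actv nid P, X, R => actv nid (subst P X R)

/-- Free recursion variables of a protocol. -/
def freeVars : Protocol → Set ℕ
  | nil => ∅
  | fork P Q => freeVars P ∪ freeVars Q
  | recp Y P => freeVars P \ {Y}
  | var Y => {Y}
  | act _ _ _ _ P => freeVars P
  | sum P Q => freeVars P ∪ freeVars Q
  | actv _ P => freeVars P

/-- Recursion is guarded: every recursion variable occurrence is under at least one
synchronisation action prefix. -/
def Guarded : Protocol → Prop
  | nil => True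
  | fork P Q => Guarded P ∧ Guarded Q
  | recp _ P => Guarded P
  | var _ => False
  | act _ _ _ _ _ => True
  | sum P Q => Guarded P ∧ Guarded Q
  | actv _ P => Guarded P

/-- A protocol is (nid)-absent if it contains no active-node construct. -/
def IdAbsent : Protocol → Prop
  | nil => True
  | fork P Q => IdAbsent P ∧ IdAbsent Q
  | recp _ P => IdAbsent P
  | var _ => True
  | act _ _ _ _ P => IdAbsent P
  | sum P Q => IdAbsent P ∧ IdAbsent Q
  | actv _ _ => False

end Protocol

/-- Structural congruence on protocols. -/
inductive Scong : Protocol → Protocol → Prop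
  | refl (P) : Scong P P
  | symm : Scong P Q → Scong Q P
  | trans : Scong P Q → Scong Q R → Scong P R
  | forkCongr : Scong P P' → Scong Q Q' → Scong (.fork P Q) (.fork P' Q')
  | sumCongr : Scong P P' → Scong Q Q' → Scong (.sum P Q) (.sum P' Q')
  | actCongr : Scong P P' → Scong (.act f d o i P) (.act f d o i P')
  | actvCongr : Scong P P' → Scong (.actv nid P) (.actv nid P')
  | recCongr : Scong P P' → Scong (.recp X P) (.recp X P')
  | forkNil (P) : Scong (.fork P .nil) P
  | forkAssoc (P Q R) : Scong (.fork P (.fork Q R)) (.fork (.fork P Q) R)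
  | forkComm (P Q) : Scong (.fork P Q) (.fork Q P)
  | sumAssoc (S1 S2 S3) : Scong (.sum S1 (.sum S2 S3)) (.sum (.sum S1 S2) S3)
  | sumComm (S1 S2) : Scong (.sum S1 S2) (.sum S2 S1)
  | recUnfold (X P) : Scong (.recp X P) (Protocol.subst P X (.recp X P))
  | actvFork (nid P Q) : Scong (.actv nid (.fork P Q)) (.fork (.actv nid P) (.actv nid Q))
  | actvSwap (id1 id2 P) : Scong (.actv id1 (.actv id2 P)) (.actv id2 (.actv id1 P))
  | actvNil (nid) : Scong (.actv nid .nil) .nil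

/-- Definitions of the distributed language:
D ::= <c>f^d?.R | R | D|D ; R ::= C | 0 | R|R ; C ::= <c>f^d! | C+C. -/
inductive Defn
  | nil
  | inp (c : Cond) (f : Label) (d : Dir) (R : Defn)
  | out (c : Cond) (f : Label) (d : Dir)
  | par (D1 D2 : Defn)
  | sum (D1 D2 : Defn)

inductive IsChoice : Defn → Prop
  | out : IsChoice (.out c f d)
  | sum : IsChoice C1 → IsChoice C2 → IsChoice (.sum C1 C2)

inductive IsReaction : Defn → Prop
  | nil : IsReaction .nil
  | choice : IsChoice C → IsReaction C
  | par : IsReaction R1 → IsReaction R2 → IsReaction (.par R1 R2)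

inductive IsDefn : Defn → Prop
  | inp : IsReaction R → IsDefn (.inp c f d R)
  | react : IsReaction R → IsDefn R
  | par : IsDefn D1 → IsDefn D2 → IsDefn (.par D1 D2)

/-- Structural congruence on definitions, including the input absorption axiom. -/
inductive DCong : Defn → Defn → Prop
  | refl (D) : DCong D D
  | symm : DCong D1 D2 → DCong D2 D1
  | trans : DCong D1 D2 → DCong D2 D3 → DCong D1 D3
  | parCongr : DCong D1 D1' → DCong D2 D2' → DCong (.par D1 D2) (.par D1' D2')
  | sumCongr : DCong D1 D1' → DCong D2 D2' → DCong (.sum D1 D2) (.sum D1' D2')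
  | inpCongr : DCong R R' → DCong (.inp c f d R) (.inp c f d R')
  | parNil (D) : DCong (.par D .nil) D
  | parAssoc (D1 D2 D3) : DCong (.par D1 (.par D2 D3)) (.par (.par D1 D2) D3)
  | parComm (D1 D2) : DCong (.par D1 D2) (.par D2 D1)
  | sumAssoc (D1 D2 D3) : DCong (.sum D1 (.sum D2 D3)) (.sum (.sum D1 D2) D3)
  | sumComm (D1 D2) : DCong (.sum D1 D2) (.sum D2 D1)
  | absorb (c f d R) : DCong (.par (.inp c f d R) (.inp c f d R)) (.inp c f d R)

/-- Actions of the definition LTS: <c>f^d?, <c>f^d! and the local step <c>f. -/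
inductive DAct
  | inp (c : Cond) (f : Label) (d : Dir)
  | out (c : Cond) (f : Label) (d : Dir)
  | tau (c : Cond) (f : Label)

/-- LTS on definitions (rules Inp, Out, Sum, Int, Self and symmetric versions). -/
inductive DStep : Defn → DAct → Defn → Prop
  | inp : DStep (.inp c f d R) (.inp c f d) (.par R (.inp c f d R))
  | out : DStep (.out c f d) (.out c f d) .nil
  | sumL : DStep C1 α C1' → DStep (.sum C1 C2) α C1'
  | sumR : DStep C2 α C2' → DStep (.sum C1 C2) α C2'
  | intL : DStep D1 α D1' → DStep (.par D1 D2) α (.par D1' D2)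
  | intR : DStep D2 α D2' → DStep (.par D1 D2) α (.par D1 D2')
  | selfL : DStep D1 (.out c1 f .slf) D1' → DStep D2 (.inp c2 f .slf) D2' →
      DStep (.par D1 D2) (.tau (Cond.and c1 c2) f) (.par D1' D2')
  | selfR : DStep D1 (.inp c2 f .slf) D1' → DStep D2 (.out c1 f .slf) D2' →
      DStep (.par D1 D2) (.tau (Cond.and c1 c2) f) (.par D1' D2')

/-- Environments mapping recursion variables to protocols. -/
abbrev Env := ℕ → Protocol

def Env.update (σ : Env) (X : ℕ) (P : Protocol) : Env :=
  fun Y => if Y = X then P else σ Y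

def Env.empty : Env := fun _ => Protocol.nil

/-- Enabling (!-)projection, as a relation: [[P]]_!^σ = D. -/
inductive ProjBang : Env → Protocol → Defn → Prop
  | act : ProjBang σ (.act f d o i P) (.out o f d)
  | actv : ProjBang σ P D → ProjBang σ (.actv nid P) D
  | nil : ProjBang σ .nil .nil
  | var : ProjBang σ (σ X) D → ProjBang σ (.var X) D
  | recp : ProjBang (Env.update σ X P) P D → ProjBang σ (.recp X P) D
  | fork : ProjBang σ P D1 → ProjBang σ Q D2 → ProjBang σ (.fork P Q) (.par D1 D2)
  | sum : ProjBang σ S1 D1 → ProjBang σ S2 D2 → ProjBang σ (.sum S1 S2) (.sum D1 D2)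

/-- Reactive (?-)projection, as a relation: [[P]]_?^σ = D. -/
inductive ProjQ : Env → Protocol → Defn → Prop
  | act : ProjBang σ P D → ProjQ σ P D' →
      ProjQ σ (.act f d o i P) (.par (.inp i f d D) D')
  | actv : ProjQ σ P D → ProjQ σ (.actv nid P) D
  | nil : ProjQ σ .nil .nil
  | var : ProjQ σ (.var X) .nil
  | recp : ProjQ (Env.update σ X P) P D → ProjQ σ (.recp X P) D
  | fork : ProjQ σ P D1 → ProjQ σ Q D2 → ProjQ σ (.fork P Q) (.par D1 D2)
  | sum : ProjQ σ S1 D1 → ProjQ σ S2 D2 → ProjQ σ (.sum S1 S2) (.par D1 D2)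

/-- Active (nid-)projection, as a relation: [[P]]_id^σ = D. -/
inductive ProjId : NodeId → Env → Protocol → Defn → Prop
  | act : ProjId nid σ P D → ProjId nid σ (.act f d o i P) D
  | actvEq : ProjId nid σ P D → ProjBang σ P D' →
      ProjId nid σ (.actv nid P) (.par D D')
  | actvNe : nid' ≠ nid → ProjId nid σ P D → ProjId nid σ (.actv nid' P) D
  | nil : ProjId nid σ .nil .nil
  | var : ProjId nid σ (.var X) .nil
  | recp : ProjId nid (Env.update σ X P) P D → ProjId nid σ (.recp X P) D
  | fork : ProjId nid σ P D1 → ProjId nid σ Q D2 → ProjId nid σ (.fork P Q) (.par D1 D2)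
  | sum : ProjId nid σ S1 D1 → ProjId nid σ S2 D2 → ProjId nid σ (.sum S1 S2) (.par D1 D2)

/-- Nonempty summation Σ starting from a head summand. -/
def sumList (d : Defn) (L : List Defn) : Defn := L.foldl Defn.sum d

/-- Finite parallel product Π (empty product is 0). -/
def parList (L : List Defn) : Defn := L.foldr Defn.par Defn.nil

/-- (Ĩ)P : a list of active-node constructs applied to a protocol. -/
def actvList (L : List NodeId) (P : Protocol) : Protocol := L.foldr Protocol.actv P

/-- Finite fork P1 | ... | Pk (empty fork is 0). -/
def forkList (L : List Protocol) : Protocol := L.foldr Protocol.fork Protocol.nil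

/-- Synchronisation summations S ::= f^d[o,i].P | S+S. -/
inductive IsSummation : Protocol → Prop
  | act : IsSummation (.act f d o i P)
  | sum : IsSummation S1 → IsSummation S2 → IsSummation (.sum S1 S2)

/-- Node states of the global model (register contents relevant here; the satisfaction
of the unspecified underlying logic is carried by the state). -/
structure GState where
  ident : NodeId
  parent : NodeId
  neighbours : Set NodeId
  sat : Cond → Prop

/-- Target(s) of a binary synchronisation given the network state. -/
inductive Target (Δ : NodeId → GState) : Dir → NodeId → NodeId → Prop
  | up (nid : NodeId) : Target Δ .up nid ((Δ nid).parent)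
  | nbr : nid' ∈ (Δ nid).neighbours → Target Δ .nbr nid nid'

/-- Network-state update with the side-effects of a binary synchronisation. -/
def updState (effOut effIn : Label → Dir → GState → NodeId → GState)
    (Δ : NodeId → GState) (nid nid' : NodeId) (f : Label) (d : Dir) : NodeId → GState :=
  fun j => if j = nid then effOut f d (Δ nid) nid'
    else if j = nid' then effIn f d (Δ nid') nid else Δ j

/-- Reduction of configurations (Δ, P), parameterised by the side-effect functions. -/
inductive Red (effOut effIn : Label → Dir → GState → NodeId → GState) :
    (NodeId → GState) → Protocol → (NodeId → GState) → Protocol → Prop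
  | bin : (d = Dir.up ∨ d = Dir.nbr) → (Δ nid).sat o → Target Δ d nid nid' → (Δ nid').sat i →
      Red effOut effIn Δ (.actv nid (.sum (.act f d o i P) S))
        (updState effOut effIn Δ nid nid' f d) (.sum (.act f d o i (.actv nid' P)) S)
  | bin' : (d = Dir.up ∨ d = Dir.nbr) → (Δ nid).sat o → Target Δ d nid nid' → (Δ nid').sat i →
      Red effOut effIn Δ (.actv nid (.act f d o i P))
        (updState effOut effIn Δ nid nid' f d) (.act f d o i (.actv nid' P))
  | brd : (Δ nid).sat o → L.Nodup →
      (∀ j, j ∈ L ↔ ((Δ j).parent = nid ∧ (Δ j).sat i)) →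
      Red effOut effIn Δ (.actv nid (.sum (.act f .star o i P) S))
        Δ (.sum (.act f .star o i (actvList L P)) S)
  | brd' : (Δ nid).sat o → L.Nodup →
      (∀ j, j ∈ L ↔ ((Δ j).parent = nid ∧ (Δ j).sat i)) →
      Red effOut effIn Δ (.actv nid (.act f .star o i P))
        Δ (.act f .star o i (actvList L P))
  | loc : (Δ nid).sat o → (Δ nid).sat i →
      Red effOut effIn Δ (.actv nid (.sum (.act f .slf o i P) S))
        Δ (.sum (.act f .slf o i (.actv nid P)) S)
  | loc' : (Δ nid).sat o → (Δ nid).sat i →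
      Red effOut effIn Δ (.actv nid (.act f .slf o i P))
        Δ (.act f .slf o i (.actv nid P))
  | synch : Red effOut effIn Δ P Δ' P' →
      Red effOut effIn Δ (.act f d o i P) Δ' (.act f d o i P')
  | idc : Red effOut effIn Δ P Δ' P' →
      Red effOut effIn Δ (.actv nid P) Δ' (.actv nid P')
  | sumc : Red effOut effIn Δ P1 Δ' P1' →
      Red effOut effIn Δ (.sum P1 P2) Δ' (.sum P1' P2)
  | parc : Red effOut effIn Δ P1 Δ' P1' →
      Red effOut effIn Δ (.fork P1 P2) Δ' (.fork P1' P2)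
  | struct : Scong P P' → Red effOut effIn Δ P' Δ' Q' → Scong Q' Q →
      Red effOut effIn Δ P Δ' Q

/-- Node states for the distributed network semantics. -/
structure NState where
  ident : NodeId
  sat : Cond → Prop

/-- Network transition labels: internal step or broadcast output nid!*^f. -/
inductive NLabel
  | tau
  | brdOut (nid : NodeId) (f : Label)

/-- Node LTS (rules Loc and oBrd lifting the definition LTS). -/
inductive NodeStep : NState × Defn → NLabel → NState × Defn → Prop
  | loc : DStep D (.tau c f) D' → s.sat c → NodeStep (s, D) .tau (s, D')
  | obrd : DStep D (.out c f .star) D' → s.sat c →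
      NodeStep (s, D) (.brdOut s.ident f) (s, D')

/-- Active contexts C[·] ::= P | C[·] | (nid)C[·] | f^d[o,i].C[·] | S + C[·] | · . -/
inductive Ctx
  | hole
  | fork (P : Protocol) (C : Ctx)
  | actv (nid : NodeId) (C : Ctx)
  | act (f : Label) (d : Dir) (o i : Cond) (C : Ctx)
  | sum (S : Protocol) (C : Ctx)

def Ctx.fill : Ctx → Protocol → Protocol
  | .hole, Q => Q
  | .fork P C, Q => .fork P (C.fill Q)
  | .actv nid C, Q => .actv nid (C.fill Q)
  | .act f d o i C, Q => .act f d o i (C.fill Q)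
  | .sum S C, Q => .sum S (C.fill Q)


private lemma dcong_both {D1 D2 : Defn} (hc : DCong D1 D2) :
    (∀ {α D'}, DStep D1 α D' → ∃ D'', DStep D2 α D'' ∧ DCong D'' D') ∧
    (∀ {α D'}, DStep D2 α D' → ∃ D'', DStep D1 α D'' ∧ DCong D'' D') := by
  induction hc with
  | refl D => exact ⟨fun h => ⟨_, h, .refl _⟩, fun h => ⟨_, h, .refl _⟩⟩
  | symm _ ih => exact ⟨ih.2, ih.1⟩
  | trans _ _ ih1 ih2 =>
    refine ⟨fun h => ?_, fun h => ?_⟩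
    · obtain ⟨X, hX, cX⟩ := ih1.1 h
      obtain ⟨Y, hY, cY⟩ := ih2.1 hX
      exact ⟨Y, hY, cY.trans cX⟩
    · obtain ⟨X, hX, cX⟩ := ih2.2 h
      obtain ⟨Y, hY, cY⟩ := ih1.2 hX
      exact ⟨Y, hY, cY.trans cX⟩
  | parCongr h1 h2 ih1 ih2 =>
    refine ⟨fun h => ?_, fun h => ?_⟩
    · cases h with
      | intL hs => obtain ⟨X, hX, cX⟩ := ih1.1 hs; exact ⟨_, .intL hX, .parCongr cX h2.symm⟩
      | intR hs => obtain ⟨X, hX, cX⟩ := ih2.1 hs; exact ⟨_, .intR hX, .parCongr h1.symm cX⟩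
      | selfL ho hi =>
        obtain ⟨X, hX, cX⟩ := ih1.1 ho; obtain ⟨Y, hY, cY⟩ := ih2.1 hi
        exact ⟨_, .selfL hX hY, .parCongr cX cY⟩
      | selfR hi ho =>
        obtain ⟨X, hX, cX⟩ := ih1.1 hi; obtain ⟨Y, hY, cY⟩ := ih2.1 ho
        exact ⟨_, .selfR hX hY, .parCongr cX cY⟩
    · cases h with
      | intL hs => obtain ⟨X, hX, cX⟩ := ih1.2 hs; exact ⟨_, .intL hX, .parCongr cX h2⟩
      | intR hs => obtain ⟨X, hX, cX⟩ := ih2.2 hs; exact ⟨_, .intR hX, .parCongr h1 cX⟩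
      | selfL ho hi =>
        obtain ⟨X, hX, cX⟩ := ih1.2 ho; obtain ⟨Y, hY, cY⟩ := ih2.2 hi
        exact ⟨_, .selfL hX hY, .parCongr cX cY⟩
      | selfR hi ho =>
        obtain ⟨X, hX, cX⟩ := ih1.2 hi; obtain ⟨Y, hY, cY⟩ := ih2.2 ho
        exact ⟨_, .selfR hX hY, .parCongr cX cY⟩
  | sumCongr h1 h2 ih1 ih2 =>
    refine ⟨fun h => ?_, fun h => ?_⟩
    · cases h with
      | sumL hs => obtain ⟨X, hX, cX⟩ := ih1.1 hs; exact ⟨_, .sumL hX, cX⟩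
      | sumR hs => obtain ⟨X, hX, cX⟩ := ih2.1 hs; exact ⟨_, .sumR hX, cX⟩
    · cases h with
      | sumL hs => obtain ⟨X, hX, cX⟩ := ih1.2 hs; exact ⟨_, .sumL hX, cX⟩
      | sumR hs => obtain ⟨X, hX, cX⟩ := ih2.2 hs; exact ⟨_, .sumR hX, cX⟩
  | @inpCongr R R' c f d hRR' ih =>
    refine ⟨fun h => ?_, fun h => ?_⟩
    · cases h with
      | inp => exact ⟨_, .inp, .parCongr hRR'.symm (.inpCongr hRR'.symm)⟩
    · cases h with
      | inp => exact ⟨_, .inp, .parCongr hRR' (.inpCongr hRR')⟩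
  | parNil D =>
    refine ⟨fun h => ?_, fun h => ?_⟩
    · cases h with
      | intL hs => exact ⟨_, hs, (DCong.parNil _).symm⟩
      | intR hs => cases hs
      | selfL _ hi => cases hi
      | selfR _ ho => cases ho
    · exact ⟨_, .intL h, .parNil _⟩
  | parAssoc D1 D2 D3 =>
    refine ⟨fun h => ?_, fun h => ?_⟩
    · cases h with
      | intL hs => exact ⟨_, .intL (.intL hs), (DCong.parAssoc _ _ _).symm⟩
      | intR hs =>
        cases hs with
        | intL hs2 => exact ⟨_, .intL (.intR hs2), (DCong.parAssoc _ _ _).symm⟩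
        | intR hs3 => exact ⟨_, .intR hs3, (DCong.parAssoc _ _ _).symm⟩
        | selfL ho hi => exact ⟨_, .selfL (.intR ho) hi, (DCong.parAssoc _ _ _).symm⟩
        | selfR hi ho => exact ⟨_, .selfR (.intR hi) ho, (DCong.parAssoc _ _ _).symm⟩
      | selfL ho hi =>
        cases hi with
        | intL hi2 => exact ⟨_, .intL (.selfL ho hi2), (DCong.parAssoc _ _ _).symm⟩
        | intR hi3 => exact ⟨_, .selfL (.intL ho) hi3, (DCong.parAssoc _ _ _).symm⟩
      | selfR hi ho =>
        cases ho with
        | intL ho2 => exact ⟨_, .intL (.selfR hi ho2), (DCong.parAssoc _ _ _).symm⟩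
        | intR ho3 => exact ⟨_, .selfR (.intL hi) ho3, (DCong.parAssoc _ _ _).symm⟩
    · cases h with
      | intL hs =>
        cases hs with
        | intL hs1 => exact ⟨_, .intL hs1, .parAssoc _ _ _⟩
        | intR hs2 => exact ⟨_, .intR (.intL hs2), .parAssoc _ _ _⟩
        | selfL ho hi => exact ⟨_, .selfL ho (.intL hi), .parAssoc _ _ _⟩
        | selfR hi ho => exact ⟨_, .selfR hi (.intL ho), .parAssoc _ _ _⟩
      | intR hs => exact ⟨_, .intR (.intR hs), .parAssoc _ _ _⟩
      | selfL ho hi =>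
        cases ho with
        | intL ho1 => exact ⟨_, .selfL ho1 (.intR hi), .parAssoc _ _ _⟩
        | intR ho2 => exact ⟨_, .intR (.selfL ho2 hi), .parAssoc _ _ _⟩
      | selfR hi ho =>
        cases hi with
        | intL hi1 => exact ⟨_, .selfR hi1 (.intR ho), .parAssoc _ _ _⟩
        | intR hi2 => exact ⟨_, .intR (.selfR hi2 ho), .parAssoc _ _ _⟩
  | parComm D1 D2 =>
    have key : ∀ (A B : Defn) {α D'}, DStep (.par A B) α D' →
        ∃ D'', DStep (.par B A) α D'' ∧ DCong D'' D' := by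
      intro A B α D' h
      cases h with
      | intL hs => exact ⟨_, .intR hs, .parComm _ _⟩
      | intR hs => exact ⟨_, .intL hs, .parComm _ _⟩
      | selfL ho hi => exact ⟨_, .selfR hi ho, .parComm _ _⟩
      | selfR hi ho => exact ⟨_, .selfL ho hi, .parComm _ _⟩
    exact ⟨fun h => key _ _ h, fun h => key _ _ h⟩
  | sumAssoc S1 S2 S3 =>
    refine ⟨fun h => ?_, fun h => ?_⟩
    · cases h with
      | sumL hs => exact ⟨_, .sumL (.sumL hs), .refl _⟩
      | sumR hs =>
        cases hs with
        | sumL hs2 => exact ⟨_, .sumL (.sumR hs2), .refl _⟩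
        | sumR hs3 => exact ⟨_, .sumR hs3, .refl _⟩
    · cases h with
      | sumL hs =>
        cases hs with
        | sumL hs1 => exact ⟨_, .sumL hs1, .refl _⟩
        | sumR hs2 => exact ⟨_, .sumR (.sumL hs2), .refl _⟩
      | sumR hs => exact ⟨_, .sumR (.sumR hs), .refl _⟩
  | sumComm S1 S2 =>
    have key : ∀ (A B : Defn) {α D'}, DStep (.sum A B) α D' →
        ∃ D'', DStep (.sum B A) α D'' ∧ DCong D'' D' := by
      intro A B α D' h
      cases h with
      | sumL hs => exact ⟨_, .sumR hs, .refl _⟩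
      | sumR hs => exact ⟨_, .sumL hs, .refl _⟩
    exact ⟨fun h => key _ _ h, fun h => key _ _ h⟩
  | absorb c f d R =>
    have cong1 : DCong (.par (.par R (.inp c f d R)) (.inp c f d R))
        (.par R (.inp c f d R)) :=
      ((DCong.parAssoc R (.inp c f d R) (.inp c f d R)).symm).trans
        (.parCongr (.refl R) (.absorb c f d R))
    refine ⟨fun h => ?_, fun h => ?_⟩
    · cases h with
      | intL hs => cases hs with
        | inp => exact ⟨_, .inp, cong1.symm⟩
      | intR hs => cases hs with
        | inp => exact ⟨_, .inp, cong1.symm.trans (.parComm _ _)⟩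
      | selfL ho _ => cases ho
      | selfR _ ho => cases ho
    · cases h with
      | inp => exact ⟨_, .intL .inp, cong1⟩

theorem dstep_closed_under_dcong (D1 D1' D2 : Defn) (α : DAct)
    (h : DStep D1 α D1') (hc : DCong D1 D2) :
    ∃ D2', DStep D2 α D2' ∧ DCong D2' D1' := by
  exact (dcong_both hc).1 h
end

section
/- The enabling projection of a protocol with guarded recursion is independent of the environment: for any protocol P in which every recursion variable occurs only under at least one synchronisation action prefix, and any environments σ and σ', the !-projection of P under σ is structurally congruent to the !-projection of P under σ'. -/
set_option autoImplicit true

theorem projBang_env_irrelevant (P : Protocol) (hg : Protocol.Guarded P)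
    (σ σ' : Env) (D D' : Defn)
    (h : ProjBang σ P D) (h' : ProjBang σ' P D') : DCong D D' := by
  revert hg
  induction h generalizing σ' D' with
  | act => intro _; cases h'; exact DCong.refl _
  | actv _ ih => intro hg; cases h' with
    | actv h2 => exact ih _ _ h2 hg
  | nil => intro _; cases h'; exact DCong.refl _
  | var _ _ => intro hg; exact absurd hg (by simp [Protocol.Guarded])
  | recp _ ih => intro hg; cases h' with
    | recp h2 => exact ih _ _ h2 hg
  | fork _ _ ih1 ih2 => intro hg; cases h' with
    | fork h1 h2 => exact DCong.parCongr (ih1 _ _ h1 hg.1) (ih2 _ _ h2 hg.2)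
  | sum _ _ ih1 ih2 => intro hg; cases h' with
    | sum h1 h2 => exact DCong.sumCongr (ih1 _ _ h1 hg.1) (ih2 _ _ h2 hg.2)
end

section
/- The enabling projection is invariant under substitution for guarded protocols: if recursion is guarded in P, then for any protocol Q and environment σ, the !-projection of P[Q/X] under σ is structurally congruent to the !-projection of P under σ. -/
set_option autoImplicit true

lemma projBang_det_guarded : ∀ (P : Protocol), Protocol.Guarded P →
    ∀ {σ σ' : Env} {D D' : Defn}, ProjBang σ P D → ProjBang σ' P D' → D = D' := by
  intro P
  induction P with
  | nil => intro _ _ _ _ _ h h'; cases h; cases h'; rfl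
  | fork P Q ihP ihQ =>
    intro hg _ _ _ _ h h'
    cases h with | fork h1 h2 => cases h' with | fork h1' h2' =>
      rw [ihP hg.1 h1 h1', ihQ hg.2 h2 h2']
  | recp Y P ih =>
    intro hg _ _ _ _ h h'
    cases h with | recp h1 => cases h' with | recp h1' => exact ih hg h1 h1'
  | var Y => intro hg; exact absurd hg (by simp [Protocol.Guarded])
  | act f d o i P ih => intro _ _ _ _ _ h h'; cases h; cases h'; rfl
  | sum P Q ihP ihQ =>
    intro hg _ _ _ _ h h'
    cases h with | sum h1 h2 => cases h' with | sum h1' h2' =>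
      rw [ihP hg.1 h1 h1', ihQ hg.2 h2 h2']
  | actv nid P ih =>
    intro hg _ _ _ _ h h'
    cases h with | actv h1 => cases h' with | actv h1' => exact ih hg h1 h1'

lemma projBang_subst_eq : ∀ (P : Protocol), Protocol.Guarded P →
    ∀ {X : ℕ} {Q : Protocol} {σ σ' : Env} {D D' : Defn},
    ProjBang σ (Protocol.subst P X Q) D → ProjBang σ' P D' → D = D' := by
  intro P
  induction P with
  | nil => intro _ _ _ _ _ _ _ h h'; cases h; cases h'; rfl
  | fork P Q ihP ihQ =>
    intro hg _ _ _ _ _ _ h h'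
    cases h with | fork h1 h2 => cases h' with | fork h1' h2' =>
      rw [ihP hg.1 h1 h1', ihQ hg.2 h2 h2']
  | recp Y P ih =>
    intro hg X Q σ σ' D D' h h'
    by_cases hYX : Y = X
    · simp only [Protocol.subst, if_pos hYX] at h
      exact projBang_det_guarded _ hg h h'
    · simp only [Protocol.subst, if_neg hYX] at h
      cases h with | recp h1 => cases h' with | recp h1' => exact ih hg h1 h1'
  | var Y => intro hg; exact absurd hg (by simp [Protocol.Guarded])
  | act f d o i P ih => intro _ _ _ _ _ _ _ h h'; cases h; cases h'; rfl
  | sum P Q ihP ihQ =>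
    intro hg _ _ _ _ _ _ h h'
    cases h with | sum h1 h2 => cases h' with | sum h1' h2' =>
      rw [ihP hg.1 h1 h1', ihQ hg.2 h2 h2']
  | actv nid P ih =>
    intro hg _ _ _ _ _ _ h h'
    cases h with | actv h1 => cases h' with | actv h1' => exact ih hg h1 h1'

theorem projBang_subst_invariant (P Q : Protocol) (X : ℕ)
    (hg : Protocol.Guarded P) (σ : Env) (D D' : Defn)
    (h : ProjBang σ (Protocol.subst P X Q) D) (h' : ProjBang σ P D') :
    DCong D D' := by
  rw [projBang_subst_eq P hg h h']
  exact DCong.refl D'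
end

section
/- Preservation of the reactive projection under equivalent environments: if Q1 and Q2 are protocols with guarded recursion such that their !-projections under σ are structurally congruent, then the ?-projection of any protocol P under σ[X ↦ Q1] is structurally congruent to the ?-projection of P under σ[X ↦ Q2]. -/
set_option autoImplicit true

/-- ProjBang of a guarded protocol does not depend on the environment. -/
lemma projBang_guarded_env_irrel {σa P D} (h : ProjBang σa P D) :
    ∀ σb, Protocol.Guarded P → ProjBang σb P D := by
  induction h with
  | act => intro σb _; exact .act
  | actv _ ih => intro σb hg; exact .actv (ih σb hg)
  | nil => intro σb _; exact .nil
  | var _ _ => intro σb hg; exact absurd hg id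
  | recp _ ih => intro σb hg; exact .recp (ih _ hg)
  | fork _ _ ih1 ih2 => intro σb hg; exact .fork (ih1 σb hg.1) (ih2 σb hg.2)
  | sum _ _ ih1 ih2 => intro σb hg; exact .sum (ih1 σb hg.1) (ih2 σb hg.2)

/-- Relation between environments: each variable is bound either to the same protocol,
or to guarded protocols whose !-projections (under any environments) are congruent. -/
def EnvRel (σ1 σ2 : Env) : Prop :=
  ∀ Y, σ1 Y = σ2 Y ∨
    (Protocol.Guarded (σ1 Y) ∧ Protocol.Guarded (σ2 Y) ∧
      ∀ σa σb D1 D2, ProjBang σa (σ1 Y) D1 → ProjBang σb (σ2 Y) D2 → DCong D1 D2)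

lemma EnvRel.update {σ1 σ2 : Env} (h : EnvRel σ1 σ2) (X : ℕ) (P : Protocol) :
    EnvRel (Env.update σ1 X P) (Env.update σ2 X P) := by
  intro Y
  by_cases hY : Y = X
  · left; simp [Env.update, hY]
  · have := h Y
    simpa [Env.update, hY] using this

lemma projBang_cong {σ1 P D1} (h1 : ProjBang σ1 P D1) :
    ∀ {σ2 D2}, EnvRel σ1 σ2 → ProjBang σ2 P D2 → DCong D1 D2 := by
  induction h1 with
  | act => intro σ2 D2 _ h2; cases h2; exact .refl _
  | actv _ ih =>
    intro σ2 D2 hR h2; cases h2 with | actv h => exact ih hR h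
  | nil => intro σ2 D2 _ h2; cases h2; exact .refl _
  | @var σ1 Y _ h ih =>
    intro σ2 D2 hR h2
    cases h2 with
    | var h' =>
      rcases hR Y with heq | ⟨_, _, hc⟩
      · exact ih hR (heq ▸ h')
      · exact hc _ _ _ _ h h'
  | recp _ ih =>
    intro σ2 D2 hR h2
    cases h2 with | recp h => exact ih (hR.update _ _) h
  | fork _ _ ih1 ih2 =>
    intro σ2 D2 hR h2
    cases h2 with | fork ha hb => exact .parCongr (ih1 hR ha) (ih2 hR hb)
  | sum _ _ ih1 ih2 =>
    intro σ2 D2 hR h2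
    cases h2 with | sum ha hb => exact .sumCongr (ih1 hR ha) (ih2 hR hb)

lemma projQ_cong {σ1 P E1} (h1 : ProjQ σ1 P E1) :
    ∀ {σ2 E2}, EnvRel σ1 σ2 → ProjQ σ2 P E2 → DCong E1 E2 := by
  induction h1 with
  | act hb _ ih =>
    intro σ2 E2 hR h2
    cases h2 with
    | act hb' hq' =>
      exact .parCongr (.inpCongr (projBang_cong hb hR hb')) (ih hR hq')
  | actv _ ih =>
    intro σ2 E2 hR h2; cases h2 with | actv h => exact ih hR h
  | nil => intro σ2 E2 _ h2; cases h2; exact .refl _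
  | var => intro σ2 E2 _ h2; cases h2; exact .refl _
  | recp _ ih =>
    intro σ2 E2 hR h2; cases h2 with | recp h => exact ih (hR.update _ _) h
  | fork _ _ ih1 ih2 =>
    intro σ2 E2 hR h2
    cases h2 with | fork ha hb => exact .parCongr (ih1 hR ha) (ih2 hR hb)
  | sum _ _ ih1 ih2 =>
    intro σ2 E2 hR h2
    cases h2 with | sum ha hb => exact .parCongr (ih1 hR ha) (ih2 hR hb)

theorem projQ_preserved_by_equiv_envs (P Q1 Q2 : Protocol) (X : ℕ) (σ : Env)
    (hg1 : Protocol.Guarded Q1) (hg2 : Protocol.Guarded Q2)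
    (hcong : ∀ D1 D2, ProjBang σ Q1 D1 → ProjBang σ Q2 D2 → DCong D1 D2)
    (E1 E2 : Defn)
    (h1 : ProjQ (Env.update σ X Q1) P E1) (h2 : ProjQ (Env.update σ X Q2) P E2) :
    DCong E1 E2 := by
  refine projQ_cong h1 ?_ h2
  intro Y
  by_cases hY : Y = X
  · right
    subst hY
    refine ⟨by simpa [Env.update] using hg1, by simpa [Env.update] using hg2, ?_⟩
    intro σa σb D1 D2 hD1 hD2
    simp only [Env.update, if_pos rfl] at hD1 hD2
    exact hcong D1 D2 (projBang_guarded_env_irrel hD1 σ hg1)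
      (projBang_guarded_env_irrel hD2 σ hg2)
  · left; simp [Env.update, hY]
end

section
/- Replicability of the reactive projection: for any protocol P and environment σ, the parallel composition of two copies of the ?-projection of P under σ is structurally congruent to a single copy: [[P]]_?^σ | [[P]]_?^σ ≡ [[P]]_?^σ. -/
set_option autoImplicit true

lemma dcong_swap (A B C E : Defn) :
    DCong (.par (.par A B) (.par C E)) (.par (.par A C) (.par B E)) := by
  refine DCong.trans (DCong.symm (DCong.parAssoc A B (.par C E))) ?_
  refine DCong.trans (DCong.parCongr (DCong.refl A)
    (DCong.trans (DCong.parAssoc B C E)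
      (DCong.trans (DCong.parCongr (DCong.parComm B C) (DCong.refl E))
        (DCong.symm (DCong.parAssoc C B E))))) ?_
  exact DCong.parAssoc A C (.par B E)

theorem projQ_replicable (P : Protocol) (σ : Env) (D : Defn)
    (h : ProjQ σ P D) : DCong (.par D D) D := by
  induction h with
  | act _ _ ih =>
    exact DCong.trans (dcong_swap _ _ _ _)
      (DCong.parCongr (DCong.absorb _ _ _ _) ih)
  | actv _ ih => exact ih
  | nil => exact DCong.parNil _
  | var => exact DCong.parNil _
  | recp _ ih => exact ih
  | fork _ _ ih1 ih2 =>
    exact DCong.trans (dcong_swap _ _ _ _) (DCong.parCongr ih1 ih2)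
  | sum _ _ ih1 ih2 =>
    exact DCong.trans (dcong_swap _ _ _ _) (DCong.parCongr ih1 ih2)
end
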